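/- Let Ŝ and Š be ℝ^d-valued 𝔽-adapted processes. Define R̃_T = {(Ĥ·Ŝ)_T + (Ȟ·Š)_T : Ĥ ∈ 𝒫_T^+, Ȟ ∈ 𝒫_T^-} and R̃_T^b = {(Ĥ·Ŝ)_T + (Ȟ·Š)_T : Ĥ ∈ 𝒫_T^+, Ȟ ∈ 𝒫_T^-, Ĥ and Ȟ bounded}, where (H·S)_T = Σ_{j=1}^T H_j·(S_j − S_{j−1}). Then R̃_T ∩ L^0_+ = {0} if and only if R̃_T^b ∩ L^0_+ = {0}. -/

import Mathlib

open MeasureTheory Filter Finset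
open scoped ENNReal NNReal

noncomputable section

namespace BidAskFTAP

variable {Ω : Type*}

/-- Componentwise positive part of a vector in `ℝ^d`. -/
def posPart {d : ℕ} (x : Fin d → ℝ) : Fin d → ℝ := fun i => max (x i) 0

/-- Componentwise negative part of a vector in `ℝ^d`. -/
def negPart {d : ℕ} (x : Fin d → ℝ) : Fin d → ℝ := fun i => max (-(x i)) 0

/-- Inner product on `ℝ^d`. -/
def dotp {d : ℕ} (x y : Fin d → ℝ) : ℝ := ∑ i, x i * y i

section Market

variable [m : MeasurableSpace Ω] {d : ℕ}

/-- `F` is a filtration on `(Ω, m)` with horizon `T`: monotone, sub-σ-algebras of `m`,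
and `F T = m` (i.e. `𝓕_T = 𝓕`). -/
def IsFiltration (F : ℕ → MeasurableSpace Ω) (T : ℕ) : Prop :=
  Monotone F ∧ (∀ t, F t ≤ m) ∧ F T = m

/-- Adaptedness of an `ℝ^d`-valued process up to time `T`. -/
def AdaptedProc (F : ℕ → MeasurableSpace Ω) (T : ℕ) (S : ℕ → Ω → Fin d → ℝ) : Prop :=
  ∀ t ≤ T, Measurable[F t] (S t)

/-- Standing assumptions on the bid and ask price processes `S̲ = Sb`, `S̄ = Sa`:
adapted, strictly positive components, and `S̲ ≤ S̄` a.s. -/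
def IsBidAsk (P : Measure Ω) (F : ℕ → MeasurableSpace Ω) (T : ℕ)
    (Sb Sa : ℕ → Ω → Fin d → ℝ) : Prop :=
  AdaptedProc F T Sb ∧ AdaptedProc F T Sa ∧
  (∀ t ≤ T, ∀ i, ∀ᵐ ω ∂P, 0 < Sb t ω i) ∧
  (∀ t ≤ T, ∀ i, ∀ᵐ ω ∂P, 0 < Sa t ω i) ∧
  (∀ t ≤ T, ∀ i, ∀ᵐ ω ∂P, Sb t ω i ≤ Sa t ω i)

/-- A trading strategy on horizon `T`: predictable (`H t` is `𝓕_{t-1}`-measurable),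
with the convention `H 0 = 0` (so that `ΔH 1 = H 1`). -/
def IsStrategy (F : ℕ → MeasurableSpace Ω) (T : ℕ) (H : ℕ → Ω → Fin d → ℝ) : Prop :=
  H 0 = 0 ∧ ∀ t, 1 ≤ t → t ≤ T → Measurable[F (t - 1)] (H t)

/-- Membership in `𝒫_T^+`: componentwise nonnegative. -/
def NonnegStrategy (T : ℕ) (H : ℕ → Ω → Fin d → ℝ) : Prop :=
  ∀ t ≤ T, ∀ ω, ∀ i, 0 ≤ H t ω i

/-- Membership in `𝒫_T^-`: componentwise nonpositive. -/
def NonposStrategy (T : ℕ) (H : ℕ → Ω → Fin d → ℝ) : Prop :=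
  ∀ t ≤ T, ∀ ω, ∀ i, H t ω i ≤ 0

/-- Uniformly bounded strategy. -/
def BoundedStrategy (T : ℕ) (H : ℕ → Ω → Fin d → ℝ) : Prop :=
  ∃ C : ℝ, ∀ t ≤ T, ∀ ω, ∀ i, |H t ω i| ≤ C

/-- The immediate–liquidation value process
`x_T(H) = -∑_{j=1}^T (ΔH_j)⁺·S̄_{j-1} + ∑_{j=1}^T (ΔH_j)⁻·S̲_{j-1} + (H_T)⁺·S̲_T - (H_T)⁻·S̄_T`. -/
def xval (Sb Sa : ℕ → Ω → Fin d → ℝ) (T : ℕ) (H : ℕ → Ω → Fin d → ℝ) (ω : Ω) : ℝ :=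
  (∑ j ∈ Icc 1 T, (dotp (negPart (H j ω - H (j - 1) ω)) (Sb (j - 1) ω)
    - dotp (posPart (H j ω - H (j - 1) ω)) (Sa (j - 1) ω)))
  + dotp (posPart (H T ω)) (Sb T ω) - dotp (negPart (H T ω)) (Sa T ω)

/-- The gain `(H · S)_T = ∑_{j=1}^T H_j · (S_j - S_{j-1})`. -/
def gain (S : ℕ → Ω → Fin d → ℝ) (T : ℕ) (H : ℕ → Ω → Fin d → ℝ) (ω : Ω) : ℝ :=
  ∑ j ∈ Icc 1 T, dotp (H j ω) (S j ω - S (j - 1) ω)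

/-- Membership (as elements of `L⁰`, i.e. up to a.s. equality) in
`𝒜_t = ℛ_t - L⁰₊(𝓕_t)`. -/
def memA (P : Measure Ω) (F : ℕ → MeasurableSpace Ω) (Sb Sa : ℕ → Ω → Fin d → ℝ)
    (t : ℕ) (f : Ω → ℝ) : Prop :=
  ∃ H : ℕ → Ω → Fin d → ℝ, IsStrategy F t H ∧
    ∃ r : Ω → ℝ, Measurable[F t] r ∧ (∀ᵐ ω ∂P, 0 ≤ r ω) ∧
      f =ᵐ[P] fun ω => xval Sb Sa t H ω - r ω

/-- The no-arbitrage condition `𝒜_t ∩ L⁰₊(𝓕_t) = {0}` at horizon `t`. -/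
def NA (P : Measure Ω) (F : ℕ → MeasurableSpace Ω) (Sb Sa : ℕ → Ω → Fin d → ℝ)
    (t : ℕ) : Prop :=
  ∀ f : Ω → ℝ, memA P F Sb Sa t f → (∀ᵐ ω ∂P, 0 ≤ f ω) → f =ᵐ[P] 0

/-- Two measures are equivalent: mutually absolutely continuous. -/
def EquivMeasure (P Q : Measure Ω) : Prop := P ≪ Q ∧ Q ≪ P

/-- The Radon–Nikodym density `dQ/dP` belongs to `L^∞(P)`. -/
def BoundedDensity (P Q : Measure Ω) : Prop :=
  ∃ C : ℝ≥0, ∀ᵐ ω ∂P, Q.rnDeriv P ω ≤ (C : ℝ≥0∞)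

/-- `Q` is an equivalent bid-ask martingale measure (EBAMM) for `(S̲, S̄)`:
`Q ∼ P`, all `S̄_t` are `Q`-integrable, and for all `1 ≤ t ≤ T` and coordinates `i`:
`S̲_{t-1}^i ≤ E_Q[S̄_t^i | 𝓕_{t-1}]` and `E_Q[S̲_t^i | 𝓕_{t-1}] ≤ S̄_{t-1}^i` a.s. -/
def IsEBAMM (P : Measure Ω) (F : ℕ → MeasurableSpace Ω) (T : ℕ)
    (Sb Sa : ℕ → Ω → Fin d → ℝ) (Q : Measure Ω) : Prop :=
  IsProbabilityMeasure Q ∧ EquivMeasure P Q ∧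
  (∀ t ≤ T, ∀ i, Integrable (fun ω => Sa t ω i) Q) ∧
  (∀ t, 1 ≤ t → t ≤ T → ∀ i,
    (∀ᵐ ω ∂P, Sb (t - 1) ω i ≤ (Q[fun ω => Sa t ω i | F (t - 1)]) ω) ∧
    (∀ᵐ ω ∂P, (Q[fun ω => Sb t ω i | F (t - 1)]) ω ≤ Sa (t - 1) ω i))

/-- `(S̃, Q)` is a consistent price system: `Q ∼ P`, `S̃` adapted, evolving between bid and
ask prices, and a `Q`-martingale. -/
def IsCPS (P : Measure Ω) (F : ℕ → MeasurableSpace Ω) (T : ℕ)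
    (Sb Sa St : ℕ → Ω → Fin d → ℝ) (Q : Measure Ω) : Prop :=
  IsProbabilityMeasure Q ∧ EquivMeasure P Q ∧ AdaptedProc F T St ∧
  (∀ t ≤ T, ∀ i, Integrable (fun ω => St t ω i) Q) ∧
  (∀ t ≤ T, ∀ i, ∀ᵐ ω ∂P, Sb t ω i ≤ St t ω i ∧ St t ω i ≤ Sa t ω i) ∧
  (∀ t, 1 ≤ t → t ≤ T → ∀ i,
    Q[fun ω => St t ω i | F (t - 1)] =ᵐ[P] fun ω => St (t - 1) ω i)

/-- `(S̃, Q)` is a supermartingale consistent price system. -/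
def IsSupCPS (P : Measure Ω) (F : ℕ → MeasurableSpace Ω) (T : ℕ)
    (Sb Sa St : ℕ → Ω → Fin d → ℝ) (Q : Measure Ω) : Prop :=
  IsProbabilityMeasure Q ∧ EquivMeasure P Q ∧ AdaptedProc F T St ∧
  (∀ t ≤ T, ∀ i, Integrable (fun ω => St t ω i) Q) ∧
  (∀ t ≤ T, ∀ i, ∀ᵐ ω ∂P, Sb t ω i ≤ St t ω i ∧ St t ω i ≤ Sa t ω i) ∧
  (∀ t, 1 ≤ t → t ≤ T → ∀ i,
    (∀ᵐ ω ∂P, (Q[fun ω => St t ω i | F (t - 1)]) ω ≤ St (t - 1) ω i))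

/-- `(S̃, Q)` is a submartingale consistent price system. -/
def IsSubCPS (P : Measure Ω) (F : ℕ → MeasurableSpace Ω) (T : ℕ)
    (Sb Sa St : ℕ → Ω → Fin d → ℝ) (Q : Measure Ω) : Prop :=
  IsProbabilityMeasure Q ∧ EquivMeasure P Q ∧ AdaptedProc F T St ∧
  (∀ t ≤ T, ∀ i, Integrable (fun ω => St t ω i) Q) ∧
  (∀ t ≤ T, ∀ i, ∀ᵐ ω ∂P, Sb t ω i ≤ St t ω i ∧ St t ω i ≤ Sa t ω i) ∧
  (∀ t, 1 ≤ t → t ≤ T → ∀ i,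
    (∀ᵐ ω ∂P, St (t - 1) ω i ≤ (Q[fun ω => St t ω i | F (t - 1)]) ω))

/-- Membership (up to a.s. equality) in
`F_{t-1,t+k} = ℛ_{t-1,t+k}⁺ + ℛ_{t-1,t+k}⁻ - L⁰₊(𝓕_{t+k})`:
`f = Hp·(S̲_{t+k} - S̄_{t-1}) - Hm·(S̄_{t+k} - S̲_{t-1}) - r` with `Hp, Hm ≥ 0`
`𝓕_{t-1}`-measurable and `r ∈ L⁰₊(𝓕_{t+k})`. -/
def memFtk (P : Measure Ω) (F : ℕ → MeasurableSpace Ω) (Sb Sa : ℕ → Ω → Fin d → ℝ)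
    (t k : ℕ) (f : Ω → ℝ) : Prop :=
  ∃ (Hp Hm : Ω → Fin d → ℝ) (r : Ω → ℝ),
    Measurable[F (t - 1)] Hp ∧ Measurable[F (t - 1)] Hm ∧
    (∀ ω i, 0 ≤ Hp ω i) ∧ (∀ ω i, 0 ≤ Hm ω i) ∧
    Measurable[F (t + k)] r ∧ (∀ᵐ ω ∂P, 0 ≤ r ω) ∧
    f =ᵐ[P] fun ω =>
      dotp (Hp ω) (Sb (t + k) ω - Sa (t - 1) ω)
        - dotp (Hm ω) (Sa (t + k) ω - Sb (t - 1) ω) - r ω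

/-- Membership (up to a.s. equality) in
`F_t = ∑_{j<t} ℛ_{j,t}⁺ + ∑_{j<t} ℛ_{j,t}⁻ - L⁰₊(𝓕_t)`. -/
def memFt (P : Measure Ω) (F : ℕ → MeasurableSpace Ω) (Sb Sa : ℕ → Ω → Fin d → ℝ)
    (t : ℕ) (f : Ω → ℝ) : Prop :=
  ∃ (Hp Hm : ℕ → Ω → Fin d → ℝ) (r : Ω → ℝ),
    (∀ j < t, Measurable[F j] (Hp j) ∧ Measurable[F j] (Hm j)) ∧
    (∀ j < t, ∀ ω i, 0 ≤ Hp j ω i ∧ 0 ≤ Hm j ω i) ∧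
    Measurable[F t] r ∧ (∀ᵐ ω ∂P, 0 ≤ r ω) ∧
    f =ᵐ[P] fun ω =>
      (∑ j ∈ range t,
        (dotp (Hp j ω) (Sb t ω - Sa j ω) - dotp (Hm j ω) (Sa t ω - Sb j ω))) - r ω

/-- `x_{s,u}(H) = -H⁺·S̄_s + H⁻·S̲_s + H⁺·S̲_u - H⁻·S̄_u` for an `𝓕_s`-measurable `H`. -/
def xval2 (Sb Sa : ℕ → Ω → Fin d → ℝ) (s u : ℕ) (H : Ω → Fin d → ℝ) (ω : Ω) : ℝ :=
  - dotp (posPart (H ω)) (Sa s ω) + dotp (negPart (H ω)) (Sb s ω)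
    + dotp (posPart (H ω)) (Sb u ω) - dotp (negPart (H ω)) (Sa u ω)

/-- Membership (up to a.s. equality) in `𝒜_{t-1,t+k} = ℛ_{t-1,t+k} - L⁰₊(𝓕_{t+k})` where
`ℛ_{t-1,t+k} = {x_{t-1,t+k}(H) : H ∈ L⁰(ℝ^d, 𝓕_{t-1})}`. -/
def memA2 (P : Measure Ω) (F : ℕ → MeasurableSpace Ω) (Sb Sa : ℕ → Ω → Fin d → ℝ)
    (t k : ℕ) (f : Ω → ℝ) : Prop :=
  ∃ (H : Ω → Fin d → ℝ) (r : Ω → ℝ),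
    Measurable[F (t - 1)] H ∧ Measurable[F (t + k)] r ∧ (∀ᵐ ω ∂P, 0 ≤ r ω) ∧
    f =ᵐ[P] fun ω => xval2 Sb Sa (t - 1) (t + k) H ω - r ω

end Market

end BidAskFTAP

/-!
Bounded arbitrages are arbitrages, so only the converse needs proof. Let `V_s` be the
cumulative gain of a possibly unbounded arbitrage candidate with `V_T ≥ 0`; we show by
induction on `s` that `V_s ≥ 0` forces `V_s = 0`. For the step, trade only in period
`s + 1`, on the `𝓕_s`-measurable event `{V_s ≤ 0}`, with the positions scaled by the
positive `𝓕_s`-measurable factor `(1 + ‖Ĥ_{s+1}‖ + ‖Ȟ_{s+1}‖)⁻¹`: this bounded strategy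
gains `V_{s+1} - V_s ≥ 0` on that event, so by bounded no-arbitrage its gain vanishes.
Hence `V_s = V_{s+1} ≥ 0` on `{V_s ≤ 0}`, so `V_s ≥ 0` everywhere, `V_s = 0` by induction,
and then `V_{s+1} = 0`.
-/

namespace BidAskFTAP

section Vectors

variable {d : ℕ}

lemma dotp_zero_left (y : Fin d → ℝ) : dotp 0 y = 0 := by
  simp [dotp]

lemma dotp_smul_left (c : ℝ) (x y : Fin d → ℝ) : dotp (c • x) y = c * dotp x y := by
  simp [dotp, Finset.mul_sum, mul_assoc]

lemma _root_.Measurable.dotp {Ω : Type*} {mΩ : MeasurableSpace Ω} {x y : Ω → Fin d → ℝ}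
    (hx : Measurable x) (hy : Measurable y) : Measurable fun ω => dotp (x ω) (y ω) := by
  unfold BidAskFTAP.dotp
  fun_prop

lemma exists_pos_normalizer {Ω : Type*} {mΩ : MeasurableSpace Ω} {x y : Ω → Fin d → ℝ}
    (hx : Measurable x) (hy : Measurable y) :
    ∃ c : Ω → ℝ, Measurable c ∧ (∀ ω, 0 < c ω) ∧
      ∀ ω i, |c ω * x ω i| ≤ 1 ∧ |c ω * y ω i| ≤ 1 := by
  refine ⟨fun ω => (1 + ‖x ω‖ + ‖y ω‖)⁻¹, by fun_prop, fun ω => by positivity, fun ω i => ?_⟩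
  have hN : 0 < 1 + ‖x ω‖ + ‖y ω‖ := by positivity
  have hx_le : |x ω i| ≤ 1 + ‖x ω‖ + ‖y ω‖ := by
    have := norm_le_pi_norm (x ω) i
    rw [Real.norm_eq_abs] at this
    linarith [norm_nonneg (y ω)]
  have hy_le : |y ω i| ≤ 1 + ‖x ω‖ + ‖y ω‖ := by
    have := norm_le_pi_norm (y ω) i
    rw [Real.norm_eq_abs] at this
    linarith [norm_nonneg (x ω)]
  dsimp only
  rw [abs_mul, abs_mul, abs_inv, abs_of_pos hN]
  exact ⟨inv_mul_le_one_of_le₀ hx_le hN.le, inv_mul_le_one_of_le₀ hy_le hN.le⟩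

end Vectors

section Gain

variable {Ω : Type*} {d : ℕ}

@[simp]
lemma gain_zero (S H : ℕ → Ω → Fin d → ℝ) : gain S 0 H = 0 := by
  funext ω
  simp [gain]

lemma gain_succ (S H : ℕ → Ω → Fin d → ℝ) (t : ℕ) (ω : Ω) :
    gain S (t + 1) H ω = gain S t H ω + dotp (H (t + 1) ω) (S (t + 1) ω - S t ω) := by
  simp [gain, Finset.sum_Icc_succ_top]

variable {F : ℕ → MeasurableSpace Ω} {T : ℕ}

lemma IsStrategy.measurable_succ {H : ℕ → Ω → Fin d → ℝ} (hH : IsStrategy F T H) {t : ℕ}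
    (ht : t + 1 ≤ T) : Measurable[F t] (H (t + 1)) := by
  simpa using hH.2 (t + 1) (by omega) ht

lemma measurable_gain (hF : Monotone F) {S H : ℕ → Ω → Fin d → ℝ} (hS : AdaptedProc F T S)
    (hH : IsStrategy F T H) {t : ℕ} (ht : t ≤ T) : Measurable[F t] (gain S t H) := by
  induction t with
  | zero =>
    rw [gain_zero]
    exact measurable_const
  | succ t ih =>
    have hprev : Measurable[F (t + 1)] (gain S t H) := (ih (by omega)).mono (hF (by omega)) le_rfl
    have hS_prev : Measurable[F (t + 1)] (S t) := (hS t (by omega)).mono (hF (by omega)) le_rfl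
    have hH_succ : Measurable[F (t + 1)] (H (t + 1)) :=
      (hH.measurable_succ ht).mono (hF (by omega)) le_rfl
    rw [show gain S (t + 1) H = _ from funext (gain_succ S H t)]
    exact hprev.add (Measurable.dotp hH_succ ((hS (t + 1) ht).sub hS_prev))

def singlePeriod (t : ℕ) (h : Ω → Fin d → ℝ) : ℕ → Ω → Fin d → ℝ :=
  fun s => if s = t + 1 then h else 0

variable {t : ℕ} {h : Ω → Fin d → ℝ}

lemma isStrategy_singlePeriod (hh : Measurable[F t] h) : IsStrategy F T (singlePeriod t h) := by
  refine ⟨by simp [singlePeriod], fun s _ _ => ?_⟩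
  by_cases hs : s = t + 1
  · subst hs
    simpa [singlePeriod] using hh
  · simp only [singlePeriod, if_neg hs]
    exact measurable_const

lemma nonnegStrategy_singlePeriod (hh : ∀ ω i, 0 ≤ h ω i) :
    NonnegStrategy T (singlePeriod t h) := by
  intro s _ ω i
  unfold singlePeriod
  split_ifs
  exacts [hh ω i, le_rfl]

lemma nonposStrategy_singlePeriod (hh : ∀ ω i, h ω i ≤ 0) :
    NonposStrategy T (singlePeriod t h) := by
  intro s _ ω i
  unfold singlePeriod
  split_ifs
  exacts [hh ω i, le_rfl]

lemma boundedStrategy_singlePeriod {C : ℝ} (hC : 0 ≤ C) (hh : ∀ ω i, |h ω i| ≤ C) :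
    BoundedStrategy T (singlePeriod t h) := by
  refine ⟨C, fun s _ ω i => ?_⟩
  unfold singlePeriod
  split_ifs
  exacts [hh ω i, by simpa using hC]

lemma gain_singlePeriod (S : ℕ → Ω → Fin d → ℝ) (ht : t + 1 ≤ T) (ω : Ω) :
    gain S T (singlePeriod t h) ω = dotp (h ω) (S (t + 1) ω - S t ω) := by
  unfold gain
  rw [Finset.sum_eq_single_of_mem (t + 1) (Finset.mem_Icc.2 ⟨by omega, ht⟩)]
  · simp [singlePeriod]
  · intro j _ hj
    simp [singlePeriod, hj, dotp_zero_left]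

end Gain

section NoArbitrage

variable {Ω : Type*} [MeasurableSpace Ω] {d : ℕ}

/-- `R̃_T ∩ L⁰₊ = {0}`. -/
def NoArbitrage (P : Measure Ω) (F : ℕ → MeasurableSpace Ω) (T : ℕ)
    (Shat Scheck : ℕ → Ω → Fin d → ℝ) : Prop :=
  ∀ Hhat Hcheck : ℕ → Ω → Fin d → ℝ,
    IsStrategy F T Hhat → NonnegStrategy T Hhat →
    IsStrategy F T Hcheck → NonposStrategy T Hcheck →
    (∀ᵐ ω ∂P, 0 ≤ gain Shat T Hhat ω + gain Scheck T Hcheck ω) →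
    (fun ω => gain Shat T Hhat ω + gain Scheck T Hcheck ω) =ᵐ[P] 0

/-- `R̃_T^b ∩ L⁰₊ = {0}`. -/
def NoBoundedArbitrage (P : Measure Ω) (F : ℕ → MeasurableSpace Ω) (T : ℕ)
    (Shat Scheck : ℕ → Ω → Fin d → ℝ) : Prop :=
  ∀ Hhat Hcheck : ℕ → Ω → Fin d → ℝ,
    IsStrategy F T Hhat → NonnegStrategy T Hhat → BoundedStrategy T Hhat →
    IsStrategy F T Hcheck → NonposStrategy T Hcheck → BoundedStrategy T Hcheck →
    (∀ᵐ ω ∂P, 0 ≤ gain Shat T Hhat ω + gain Scheck T Hcheck ω) →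
    (fun ω => gain Shat T Hhat ω + gain Scheck T Hcheck ω) =ᵐ[P] 0

variable {P : Measure Ω} {F : ℕ → MeasurableSpace Ω} {T : ℕ} {Shat Scheck : ℕ → Ω → Fin d → ℝ}

lemma NoArbitrage.noBoundedArbitrage (h : NoArbitrage P F T Shat Scheck) :
    NoBoundedArbitrage P F T Shat Scheck :=
  fun Hhat Hcheck hShat hNhat _ hScheck hNcheck _ => h Hhat Hcheck hShat hNhat hScheck hNcheck

lemma NoBoundedArbitrage.ae_eq_zero_on_of_ae_nonneg_on
    (hb : NoBoundedArbitrage P F T Shat Scheck) {t : ℕ} (ht : t + 1 ≤ T)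
    {A : Set Ω} (hA : MeasurableSet[F t] A) {hp hm : Ω → Fin d → ℝ}
    (hp_meas : Measurable[F t] hp) (hm_meas : Measurable[F t] hm)
    (hp_nonneg : ∀ ω i, 0 ≤ hp ω i) (hm_nonpos : ∀ ω i, hm ω i ≤ 0)
    (hgain : ∀ᵐ ω ∂P, ω ∈ A →
      0 ≤ dotp (hp ω) (Shat (t + 1) ω - Shat t ω) + dotp (hm ω) (Scheck (t + 1) ω - Scheck t ω)) :
    ∀ᵐ ω ∂P, ω ∈ A →
      dotp (hp ω) (Shat (t + 1) ω - Shat t ω)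
        + dotp (hm ω) (Scheck (t + 1) ω - Scheck t ω) = 0 := by
  obtain ⟨c, hc_meas, hc_pos, hc_bound⟩ := exists_pos_normalizer hp_meas hm_meas
  set χ := A.indicator c
  have hχ_nonneg : ∀ ω, 0 ≤ χ ω := Set.indicator_nonneg fun ω _ => (hc_pos ω).le
  have hχ_bound : ∀ ω i, |χ ω * hp ω i| ≤ 1 ∧ |χ ω * hm ω i| ≤ 1 := by
    intro ω i
    by_cases hω : ω ∈ A
    · simpa [χ, hω] using hc_bound ω i
    · simp [χ, hω]
  have hχ_meas : Measurable[F t] χ := hc_meas.indicator hA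
  have hKhat := isStrategy_singlePeriod (T := T) (hχ_meas.smul hp_meas)
  have hKcheck := isStrategy_singlePeriod (T := T) (hχ_meas.smul hm_meas)
  have hgain_K : ∀ ω, gain Shat T (singlePeriod t (χ • hp)) ω
      + gain Scheck T (singlePeriod t (χ • hm)) ω
      = χ ω * (dotp (hp ω) (Shat (t + 1) ω - Shat t ω)
        + dotp (hm ω) (Scheck (t + 1) ω - Scheck t ω)) := by
    intro ω
    rw [gain_singlePeriod _ ht, gain_singlePeriod _ ht, Pi.smul_apply', Pi.smul_apply',
      dotp_smul_left, dotp_smul_left, mul_add]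
  have hzero := hb _ _ hKhat
    (nonnegStrategy_singlePeriod fun ω i => mul_nonneg (hχ_nonneg ω) (hp_nonneg ω i))
    (boundedStrategy_singlePeriod zero_le_one fun ω i => (hχ_bound ω i).1) hKcheck
    (nonposStrategy_singlePeriod fun ω i =>
      mul_nonpos_of_nonneg_of_nonpos (hχ_nonneg ω) (hm_nonpos ω i))
    (boundedStrategy_singlePeriod zero_le_one fun ω i => (hχ_bound ω i).2)
    (by
      filter_upwards [hgain] with ω hω
      rw [hgain_K]
      by_cases hωA : ω ∈ A
      · exact mul_nonneg (hχ_nonneg ω) (hω hωA)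
      · simp [χ, hωA])
  filter_upwards [hzero] with ω hω hωA
  rw [Pi.zero_apply, hgain_K, show χ ω = c ω from Set.indicator_of_mem hωA c] at hω
  exact (mul_eq_zero.1 hω).resolve_left (hc_pos ω).ne'

lemma NoBoundedArbitrage.gain_ae_eq_zero_of_ae_nonneg
    (hb : NoBoundedArbitrage P F T Shat Scheck) (hF : Monotone F)
    (hShat : AdaptedProc F T Shat) (hScheck : AdaptedProc F T Scheck)
    {Hhat Hcheck : ℕ → Ω → Fin d → ℝ} (hHhat : IsStrategy F T Hhat) (hNhat : NonnegStrategy T Hhat)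
    (hHcheck : IsStrategy F T Hcheck) (hNcheck : NonposStrategy T Hcheck) :
    ∀ s ≤ T, (∀ᵐ ω ∂P, 0 ≤ gain Shat s Hhat ω + gain Scheck s Hcheck ω) →
      (fun ω => gain Shat s Hhat ω + gain Scheck s Hcheck ω) =ᵐ[P] 0 := by
  intro s
  induction s with
  | zero =>
    intro _ _
    simp only [gain_zero, Pi.zero_apply, add_zero]
    rfl
  | succ s ih =>
    intro hs hV_succ
    set V := fun ω => gain Shat s Hhat ω + gain Scheck s Hcheck ω
    have hV_meas : Measurable[F s] V :=
      (measurable_gain hF hShat hHhat (by omega)).add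
        (measurable_gain hF hScheck hHcheck (by omega))
    have hstep : ∀ ω, gain Shat (s + 1) Hhat ω + gain Scheck (s + 1) Hcheck ω
        = V ω + (dotp (Hhat (s + 1) ω) (Shat (s + 1) ω - Shat s ω)
          + dotp (Hcheck (s + 1) ω) (Scheck (s + 1) ω - Scheck s ω)) := by
      intro ω
      rw [gain_succ, gain_succ]
      ring
    have hstep_zero := hb.ae_eq_zero_on_of_ae_nonneg_on hs
      (measurableSet_le hV_meas measurable_const)
      (hHhat.measurable_succ hs) (hHcheck.measurable_succ hs)
      (hNhat (s + 1) hs) (hNcheck (s + 1) hs)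
      (by
        filter_upwards [hV_succ] with ω hω hωA
        rw [hstep] at hω
        linarith [show V ω ≤ 0 from hωA])
    have hV_nonneg : ∀ᵐ ω ∂P, 0 ≤ V ω := by
      filter_upwards [hV_succ, hstep_zero] with ω hω hω_zero
      by_contra hneg
      rw [hstep, hω_zero (show V ω ≤ 0 by linarith)] at hω
      linarith
    have hV_zero := ih (by omega) hV_nonneg
    filter_upwards [hV_zero, hstep_zero] with ω hω hω_zero
    rw [Pi.zero_apply] at hω ⊢
    rw [hstep, hω, hω_zero (show V ω ≤ 0 from hω.le), add_zero]

lemma NoBoundedArbitrage.noArbitrage (hb : NoBoundedArbitrage P F T Shat Scheck)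
    (hF : Monotone F) (hShat : AdaptedProc F T Shat) (hScheck : AdaptedProc F T Scheck) :
    NoArbitrage P F T Shat Scheck :=
  fun _ _ hHhat hNhat hHcheck hNcheck =>
    hb.gain_ae_eq_zero_of_ae_nonneg hF hShat hScheck hHhat hNhat hHcheck hNcheck T le_rfl

end NoArbitrage

end BidAskFTAP

open BidAskFTAP in
theorem stmt1_general {Ω : Type*} [m : MeasurableSpace Ω] {d T : ℕ}
    (P : MeasureTheory.Measure Ω)
    (F : ℕ → MeasurableSpace Ω) (hF : IsFiltration F T)
    (Shat Scheck : ℕ → Ω → Fin d → ℝ)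
    (hadapt1 : AdaptedProc F T Shat) (hadapt2 : AdaptedProc F T Scheck) :
    (∀ Hhat Hcheck : ℕ → Ω → Fin d → ℝ,
      IsStrategy F T Hhat → NonnegStrategy T Hhat →
      IsStrategy F T Hcheck → NonposStrategy T Hcheck →
      (∀ᵐ ω ∂P, 0 ≤ gain Shat T Hhat ω + gain Scheck T Hcheck ω) →
      (fun ω => gain Shat T Hhat ω + gain Scheck T Hcheck ω) =ᵐ[P] 0)
    ↔
    (∀ Hhat Hcheck : ℕ → Ω → Fin d → ℝ,
      IsStrategy F T Hhat → NonnegStrategy T Hhat → BoundedStrategy T Hhat →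
      IsStrategy F T Hcheck → NonposStrategy T Hcheck → BoundedStrategy T Hcheck →
      (∀ᵐ ω ∂P, 0 ≤ gain Shat T Hhat ω + gain Scheck T Hcheck ω) →
      (fun ω => gain Shat T Hhat ω + gain Scheck T Hcheck ω) =ᵐ[P] 0) := by
  exact ⟨NoArbitrage.noBoundedArbitrage,
    fun hb => NoBoundedArbitrage.noArbitrage hb hF.1 hadapt1 hadapt2⟩

open BidAskFTAP in
/-- `R̃_T ∩ L⁰₊ = {0}` holds if and only if `R̃_T^b ∩ L⁰₊ = {0}`, where
`R̃_T^b` uses only bounded strategies. -/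
theorem stmt1 {Ω : Type*} [m : MeasurableSpace Ω] {d T : ℕ} (hT : 1 ≤ T)
    (P : MeasureTheory.Measure Ω) [MeasureTheory.IsProbabilityMeasure P]
    (hcomp : P.IsComplete)
    (F : ℕ → MeasurableSpace Ω) (hF : IsFiltration F T)
    (Shat Scheck : ℕ → Ω → Fin d → ℝ)
    (hadapt1 : AdaptedProc F T Shat) (hadapt2 : AdaptedProc F T Scheck) :
    (∀ Hhat Hcheck : ℕ → Ω → Fin d → ℝ,
      IsStrategy F T Hhat → NonnegStrategy T Hhat →
      IsStrategy F T Hcheck → NonposStrategy T Hcheck →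
      (∀ᵐ ω ∂P, 0 ≤ gain Shat T Hhat ω + gain Scheck T Hcheck ω) →
      (fun ω => gain Shat T Hhat ω + gain Scheck T Hcheck ω) =ᵐ[P] 0)
    ↔
    (∀ Hhat Hcheck : ℕ → Ω → Fin d → ℝ,
      IsStrategy F T Hhat → NonnegStrategy T Hhat → BoundedStrategy T Hhat →
      IsStrategy F T Hcheck → NonposStrategy T Hcheck → BoundedStrategy T Hcheck →
      (∀ᵐ ω ∂P, 0 ≤ gain Shat T Hhat ω + gain Scheck T Hcheck ω) →
      (fun ω => gain Shat T Hhat ω + gain Scheck T Hcheck ω) =ᵐ[P] 0) :=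
  stmt1_general (m := m) P F hF Shat Scheck hadapt1 hadapt2
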